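/- arXiv:1604.00660 — 4 statements merged into one kernel-verified Lean document; each statement's English description precedes it below -/
import Mathlib

section
/- Let a_1 ≥ a_2 ≥ ... ≥ a_n be rational numbers such that a_i - a_{i+1} ≤ 1 for all 1 ≤ i ≤ n-1, and set A = (1/n)·∑_{i=1}^n a_i. Then for every 1 ≤ r ≤ n, ∑_{i=1}^r a_i - r·A ≤ r(n-r)/2. -/
/-!
Put `b i = a i + i`. The gap condition says exactly that `b` is weakly increasing, and an
increasing sequence has prefix averages at most its total average (Chebyshev's sum inequality
against the indicator of `[1, r]`). Passing from `b` back to `a` subtracts the arithmetic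
progression `1, 2, …, n`, whose prefix sums exceed `r` times its mean by exactly `r (n - r) / 2`.
-/

open Finset

lemma sum_Icc_one_natCast_mul_two {α : Type*} [CommSemiring α] (m : ℕ) :
    (∑ i ∈ Icc 1 m, (i : α)) * 2 = m * (m + 1) := by
  induction m with
  | zero => simp
  | succ k ih =>
    rw [sum_Icc_succ_top (by omega), add_mul, ih]
    push_cast
    ring

lemma monotoneOn_add_natCast_of_sub_succ_le_one {α : Type*} [Ring α] [PartialOrder α]
    [IsOrderedRing α] {n : ℕ} {a : ℕ → α}
    (hgap : ∀ i, 1 ≤ i → i + 1 ≤ n → a i - a (i + 1) ≤ 1) :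
    MonotoneOn (fun i ↦ a i + i) (Set.Icc 1 n) := by
  refine monotoneOn_of_le_succ Set.ordConnected_Icc fun i _ hi hi' ↦ ?_
  rw [Order.succ_eq_add_one] at hi' ⊢
  have hstep : a i ≤ a (i + 1) + 1 := sub_le_iff_le_add'.mp (hgap i hi.1 hi'.2)
  calc a i + i ≤ a (i + 1) + 1 + i := add_le_add_left hstep _
    _ = a (i + 1) + ↑(i + 1) := by push_cast; abel

lemma natCast_mul_sum_Icc_le_mul_sum_Icc {α : Type*} [CommRing α] [LinearOrder α]
    [IsStrictOrderedRing α] {n r : ℕ} {b : ℕ → α} (hb : MonotoneOn b (Set.Icc 1 n))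
    (hrn : r ≤ n) :
    (n : α) * ∑ i ∈ Icc 1 r, b i ≤ r * ∑ i ∈ Icc 1 n, b i := by
  set g : ℕ → α := fun i ↦ if i ≤ r then 1 else 0
  have hfilter : (Icc 1 n).filter (· ≤ r) = Icc 1 r := by
    ext i
    simp only [mem_filter, mem_Icc]
    omega
  have hbg : AntivaryOn b g (Icc 1 n) := by
    intro i hi j hj hij
    rw [coe_Icc] at hi hj
    simp only [g] at hij
    split_ifs at hij with hir hjr <;> norm_num at hij
    exact hb hj hi (by omega)
  have hchebyshev := hbg.card_mul_sum_le_sum_mul_sum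
  simp only [g, mul_ite, mul_one, mul_zero, ← sum_filter, hfilter,
    Nat.card_Icc, Nat.add_sub_cancel] at hchebyshev
  simpa [mul_comm] using hchebyshev

theorem stmt3_general (n : ℕ) (a : ℕ → ℚ)
    (hgap : ∀ i, 1 ≤ i → i ≤ n - 1 → a i - a (i + 1) ≤ 1)
    (A : ℚ) (hA : A = (∑ i ∈ Finset.Icc 1 n, a i) / (n : ℚ))
    (r : ℕ) (hrn : r ≤ n) :
    (∑ i ∈ Finset.Icc 1 r, a i) - (r : ℚ) * A ≤ (r : ℚ) * ((n : ℚ) - (r : ℚ)) / 2 := by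
  obtain rfl | hn := n.eq_zero_or_pos
  · obtain rfl : r = 0 := by omega
    simp
  set b : ℕ → ℚ := fun i ↦ a i + i
  have hb : MonotoneOn b (Set.Icc 1 n) :=
    monotoneOn_add_natCast_of_sub_succ_le_one fun i hi hin ↦ hgap i hi (by omega)
  have hprefix := natCast_mul_sum_Icc_le_mul_sum_Icc hb hrn
  have hsum_a (m : ℕ) : ∑ i ∈ Icc 1 m, a i = ∑ i ∈ Icc 1 m, b i - m * (m + 1) / 2 := by
    have := sum_Icc_one_natCast_mul_two (α := ℚ) m
    simp only [b, sum_add_distrib]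
    linarith
  rw [hA, hsum_a r, hsum_a n,
    ← mul_le_mul_iff_of_pos_left (Nat.cast_pos.mpr hn : (0 : ℚ) < n)]
  field_simp
  linear_combination 2 * hprefix

/-- If `a 1 ≥ a 2 ≥ … ≥ a n` with consecutive gaps at most `1`, and `A` is the mean, then
`a 1 + ⋯ + a r - r·A ≤ r(n-r)/2` for all `1 ≤ r ≤ n`. -/
theorem stmt3 (n : ℕ) (hn : 1 ≤ n) (a : ℕ → ℚ)
    (hdec : ∀ i, 1 ≤ i → i ≤ n - 1 → a (i + 1) ≤ a i)
    (hgap : ∀ i, 1 ≤ i → i ≤ n - 1 → a i - a (i + 1) ≤ 1)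
    (A : ℚ) (hA : A = (∑ i ∈ Finset.Icc 1 n, a i) / (n : ℚ))
    (r : ℕ) (hr1 : 1 ≤ r) (hrn : r ≤ n) :
    (∑ i ∈ Finset.Icc 1 r, a i) - (r : ℚ) * A ≤ (r : ℚ) * ((n : ℚ) - (r : ℚ)) / 2 :=
  stmt3_general n a hgap A hA r hrn
end

section
/- Let F_q be a finite field, n ≥ 1, x ∈ F_q^×, and let r_1, ..., r_n ∈ {0, 1, ..., q-2}. Consider the sum S = ∑ x_1^{r_1} ⋯ x_n^{r_n}, taken over all (x_1, ..., x_n) ∈ (F_q^×)^n with x_1 ⋯ x_n = x. If r_1 = r_2 = ... = r_n = r then S = (-1)^{n-1} x^r; otherwise S = 0. -/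
/-!
A tuple of units with product `x` is determined by its last `n - 1` entries `s`, its first
entry being `x * (∏ s)⁻¹`. The sum therefore factors as `x ^ r₀` times the product over
`i ≥ 1` of `∑ t, t ^ rᵢ * t⁻¹ ^ r₀`, and since `0 ≤ rᵢ, r₀ < q - 1` each of these
orthogonality sums is `-1` if `rᵢ = r₀` and `0` otherwise.
-/

open Finset

namespace FiniteField

variable {K : Type*} [Field K] [Fintype K] [DecidableEq K]

theorem sum_units_pow_of_lt {k : ℕ} (hk : k < Fintype.card K - 1) :
    ∑ t : Kˣ, (t : K) ^ k = if k = 0 then -1 else 0 := by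
  rw [sum_pow_units]
  exact if_congr ⟨fun h ↦ Nat.eq_zero_of_dvd_of_lt h hk, fun h ↦ h ▸ dvd_zero _⟩ rfl rfl

theorem sum_units_pow_mul_inv_pow {a b : ℕ} (ha : a < Fintype.card K - 1)
    (hb : b < Fintype.card K - 1) :
    ∑ t : Kˣ, (t : K) ^ a * ((t⁻¹ : Kˣ) : K) ^ b = if a = b then -1 else 0 := by
  wlog hba : b ≤ a generalizing a b
  · rw [← Equiv.sum_comp (Equiv.inv Kˣ)]
    simp only [Equiv.inv_apply, inv_inv]
    simp_rw [mul_comm ((_ : K) ^ a)]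
    rw [this hb ha (by omega)]
    exact if_congr eq_comm rfl rfl
  have hpow (t : Kˣ) : (t : K) ^ a * ((t⁻¹ : Kˣ) : K) ^ b = (t : K) ^ (a - b) := by
    rw [← Units.val_pow_eq_pow_val, ← Units.val_pow_eq_pow_val, ← Units.val_mul,
      ← Units.val_pow_eq_pow_val, inv_pow, ← pow_sub _ hba]
  simp only [hpow, sum_units_pow_of_lt (lt_of_le_of_lt (Nat.sub_le a b) ha)]
  exact if_congr (by omega) rfl rfl

end FiniteField

theorem Finset.sum_filter_prod_eq_sum_cons {G M : Type*} [CommGroup G] [Fintype G]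
    [DecidableEq G] [AddCommMonoid M] (m : ℕ) (x : G) (f : (Fin (m + 1) → G) → M) :
    ∑ t ∈ univ.filter (fun t : Fin (m + 1) → G ↦ ∏ i, t i = x), f t =
      ∑ s : Fin m → G, f (Fin.cons (x * (∏ i, s i)⁻¹) s) := by
  rw [sum_filter, ← (Fin.consEquiv fun _ ↦ G).sum_comp, Fintype.sum_prod_type, sum_comm]
  refine Fintype.sum_congr _ _ fun s ↦ ?_
  simp only [Fin.consEquiv_apply, Fin.prod_univ_succ, Fin.cons_zero, Fin.cons_succ,
    ← eq_mul_inv_iff_mul_eq]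
  rw [sum_ite_eq', if_pos (mem_univ _)]
  rfl

theorem Fin.prod_cons_mul_inv_prod_pow {G : Type*} [CommGroup G] {m : ℕ} (x : G)
    (s : Fin m → G) (r : Fin (m + 1) → ℕ) :
    ∏ i, (Fin.cons (x * (∏ j, s j)⁻¹) s : Fin (m + 1) → G) i ^ r i =
      x ^ r 0 * ∏ i, s i ^ r i.succ * (s i)⁻¹ ^ r 0 := by
  simp only [Fin.prod_univ_succ, Fin.cons_zero, Fin.cons_succ, mul_pow, prod_mul_distrib,
    prod_pow, prod_inv_distrib, mul_comm, mul_assoc]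

theorem Fin.forall_eq_iff_forall_succ_eq_zero {α : Type*} {m : ℕ} (r : Fin (m + 1) → α) :
    (∀ i j, r i = r j) ↔ ∀ i : Fin m, r i.succ = r 0 := by
  refine ⟨fun h i ↦ h _ _, fun h i j ↦ ?_⟩
  have h' : ∀ i, r i = r 0 := Fin.forall_fin_succ.2 ⟨rfl, h⟩
  rw [h' i, h' j]

/-- For a finite field `F` with `q` elements, `x ∈ F^×`, and exponents
`r i ∈ {0, …, q-2}`, the sum `∑ x₁^{r 1} ⋯ xₙ^{r n}` over all `n`-tuples of units with
product `x` equals `(-1)^{n-1} x^r` if all the `r i` are equal to some `r`, and `0`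
otherwise. -/
theorem stmt6 (F : Type*) [Field F] [Fintype F] [DecidableEq F] (n : ℕ) (hn : 1 ≤ n) (x : Fˣ)
    (r : Fin n → ℕ) (hr : ∀ i, r i ≤ Fintype.card F - 2) :
    (∑ t ∈ Finset.univ.filter (fun t : Fin n → Fˣ => ∏ i, t i = x),
        ∏ i, ((t i : F) ^ (r i))) =
      if ∀ i j, r i = r j then (-1 : F) ^ (n - 1) * (x : F) ^ (r ⟨0, hn⟩) else 0 := by
  obtain ⟨m, rfl⟩ := Nat.exists_eq_add_of_le' hn
  have hr' (i : Fin (m + 1)) : r i < Fintype.card F - 1 := by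
    have := Fintype.one_lt_card (α := F)
    have := hr i
    omega
  calc _ = ∑ s : Fin m → Fˣ,
        ((∏ i, (Fin.cons (x * (∏ j, s j)⁻¹) s : Fin (m + 1) → Fˣ) i ^ r i : Fˣ) : F) := by
        rw [sum_filter_prod_eq_sum_cons]
        push_cast
        rfl
    _ = (x : F) ^ r 0 *
          ∏ i : Fin m, ∑ t : Fˣ, (t : F) ^ r i.succ * ((t⁻¹ : Fˣ) : F) ^ r 0 := by
        simp only [Fin.prod_cons_mul_inv_prod_pow, Fintype.prod_sum, mul_sum]
        push_cast
        rfl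
    _ = (x : F) ^ r 0 * ∏ i : Fin m, if r i.succ = r 0 then -1 else 0 := by
        simp only [FiniteField.sum_units_pow_mul_inv_pow (hr' _) (hr' _)]
    _ = _ := by
        simp only [prod_ite_zero, Fin.forall_eq_iff_forall_succ_eq_zero r, mem_univ,
          forall_const, prod_const, card_univ, Fintype.card_fin, Nat.add_sub_cancel, mul_ite,
          mul_zero]
        exact if_congr Iff.rfl (mul_comm _ _) rfl
end

section
/- Let p be a prime, n ≥ 1, m ≥ 1, and c_1, ..., c_n ∈ {1, ..., p-2}. For an n-tuple d = (d_1, ..., d_n) of nonnegative integers define the polynomial u_d(X) = ∑_{r ≥ 0} (-1)^{nr} · binom(d_1, r) ⋯ binom(d_n, r) · X^r over F_p. Set c̃_i = c_i · (1 + p + ... + p^{m-1}). Then in F_p[X] one has u_{c̃}(X) = ∏_{j=0}^{m-1} u_c(X)^{p^j} (where u_c(X)^{p^j} = u_c(X^{p^j}) composed via Frobenius, i.e., the p^j-th power of the polynomial u_c). -/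
/-!
Write `c̃ = c + p c̃'`, where `c̃'` is the analogous vector for `m - 1`. Since every `c i < p`,
Lucas' theorem splits each binomial coefficient as
`binom(c i + p c̃' i, r) = binom(c i, r % p) · binom(c̃' i, r / p)` in `F_p`, and the sign splits
the same way because `x ^ p = x` in `F_p`. As `u_c` has degree `< p`, these are exactly the
coefficients of `u_c(X) · u_{c̃'}(X ^ p) = u_c · u_{c̃'} ^ p`, and induction on `m` finishes.
-/

open Polynomial

/-- The polynomial `u_d(X) = ∑_{r ≥ 0} (-1)^{nr} binom(d 1, r) ⋯ binom(d n, r) X^r`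
over `F_p` (the sum is finite since the binomial coefficients vanish for large `r`). -/
noncomputable def uPoly (p n : ℕ) (d : Fin n → ℕ) : Polynomial (ZMod p) :=
  ∑ r ∈ Finset.range ((∑ i, d i) + 1),
    C ((-1 : ZMod p) ^ (n * r) * ∏ i, ((d i).choose r : ZMod p)) * X ^ r

namespace Polynomial

theorem coeff_mul_expand_of_degree_lt {R : Type*} [CommSemiring R] {p : ℕ} (hp : 0 < p)
    {f : R[X]} (hf : f.degree < p) (g : R[X]) (r : ℕ) :
    (f * expand R p g).coeff r = f.coeff (r % p) * g.coeff (r / p) := by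
  rw [coeff_mul, Finset.sum_eq_single (r % p, p * (r / p)), coeff_expand_mul' hp]
  · rintro ⟨x, y⟩ hxy hne
    rw [Finset.HasAntidiagonal.mem_antidiagonal] at hxy
    dsimp only
    obtain hx | hx := le_or_gt p x
    · rw [(degree_lt_iff_coeff_zero f p).1 hf x hx, zero_mul]
    rw [coeff_expand hp, if_neg, mul_zero]
    rintro ⟨t, rfl⟩
    apply hne
    rw [← hxy, Nat.add_mul_mod_self_left, Nat.mod_eq_of_lt hx, Nat.add_mul_div_left _ _ hp,
      Nat.div_eq_of_lt hx, zero_add]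
  · exact fun h => absurd (Finset.HasAntidiagonal.mem_antidiagonal.2 (Nat.mod_add_div r p)) h

end Polynomial

namespace ZMod

variable {p : ℕ} [Fact p.Prime]

theorem pow_eq_pow_mod_mul_pow_div (x : ZMod p) (r : ℕ) :
    x ^ r = x ^ (r % p) * x ^ (r / p) := by
  conv_lhs => rw [← Nat.mod_add_div r p]
  rw [pow_add, pow_mul, pow_card]

theorem natCast_choose_add_mul {a : ℕ} (ha : a < p) (b r : ℕ) :
    ((a + p * b).choose r : ZMod p) = (a.choose (r % p) * b.choose (r / p) : ℕ) := by
  rw [(natCast_eq_natCast_iff _ _ _).2 Choose.choose_modEq_choose_mod_mul_choose_div_nat,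
    Nat.add_mul_mod_self_left, Nat.mod_eq_of_lt ha, Nat.add_mul_div_left _ _ (by omega),
    Nat.div_eq_of_lt ha, zero_add]

end ZMod

section uPoly

variable {p n : ℕ}

theorem coeff_uPoly (hn : 0 < n) (d : Fin n → ℕ) (r : ℕ) :
    (uPoly p n d).coeff r = (-1 : ZMod p) ^ (n * r) * ∏ i, ((d i).choose r : ZMod p) := by
  simp only [uPoly, finsetSum_coeff, coeff_C_mul, coeff_X_pow, mul_ite, mul_one, mul_zero,
    Finset.sum_ite_eq, Finset.mem_range, Nat.lt_succ_iff]
  split_ifs with hr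
  · rfl
  · let i₀ : Fin n := ⟨0, hn⟩
    have hi₀ : d i₀ < r :=
      (Finset.single_le_sum (fun i _ => Nat.zero_le (d i)) (Finset.mem_univ i₀)).trans_lt
        (not_le.1 hr)
    rw [Finset.prod_eq_zero (Finset.mem_univ i₀) (by rw [Nat.choose_eq_zero_of_lt hi₀,
      Nat.cast_zero]), mul_zero]

theorem degree_uPoly_lt (hn : 0 < n) {d : Fin n → ℕ} (hd : ∀ i, d i < p) :
    (uPoly p n d).degree < p := by
  refine (degree_lt_iff_coeff_zero _ _).2 fun r hr => ?_
  let i₀ : Fin n := ⟨0, hn⟩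
  rw [coeff_uPoly hn, Finset.prod_eq_zero (Finset.mem_univ i₀)
    (by rw [Nat.choose_eq_zero_of_lt ((hd i₀).trans_le hr), Nat.cast_zero]), mul_zero]

variable [Fact p.Prime]

theorem uPoly_add_mul (hn : 0 < n) {a : Fin n → ℕ} (ha : ∀ i, a i < p) (b : Fin n → ℕ) :
    uPoly p n (fun i => a i + p * b i) = uPoly p n a * uPoly p n b ^ p := by
  ext r
  rw [← ZMod.expand_card, coeff_mul_expand_of_degree_lt (Fact.out : p.Prime).pos
    (degree_uPoly_lt hn ha), coeff_uPoly hn, coeff_uPoly hn, coeff_uPoly hn, pow_mul,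
    ZMod.pow_eq_pow_mod_mul_pow_div, ← pow_mul, ← pow_mul]
  simp only [ZMod.natCast_choose_add_mul (ha _), Nat.cast_mul, Finset.prod_mul_distrib]
  ring

theorem uPoly_mul_geom_sum (hn : 0 < n) {a : Fin n → ℕ} (ha : ∀ i, a i < p) (m : ℕ) :
    uPoly p n (fun i => a i * ∑ j ∈ Finset.range m, p ^ j) =
      ∏ j ∈ Finset.range m, uPoly p n a ^ p ^ j := by
  induction m with
  | zero => simp [uPoly]
  | succ m ih =>
    have hdigits : (fun i => a i * ∑ j ∈ Finset.range (m + 1), p ^ j) =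
        fun i => a i + p * (a i * ∑ j ∈ Finset.range m, p ^ j) := by
      funext i
      simp only [Finset.sum_range_succ', pow_succ', ← Finset.mul_sum, pow_zero]
      ring
    rw [hdigits, uPoly_add_mul hn ha, ih, Finset.prod_range_succ', pow_zero, pow_one, mul_comm,
      ← Finset.prod_pow]
    congr 1
    exact Finset.prod_congr rfl fun j _ => by rw [← pow_mul, pow_succ]

end uPoly

theorem stmt8_general (p : ℕ) [Fact p.Prime] (n m : ℕ) (hn : 1 ≤ n)
    (c : Fin n → ℕ) (hc : ∀ i, 1 ≤ c i ∧ c i ≤ p - 2) :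
    uPoly p n (fun i => c i * ∑ j ∈ Finset.range m, p ^ j) =
      ∏ j ∈ Finset.range m, (uPoly p n c) ^ (p ^ j) := by
  have hp : 2 ≤ p := (Fact.out : p.Prime).two_le
  exact uPoly_mul_geom_sum hn (fun i => by have := (hc i).2; omega) m

/-- For `c i ∈ {1, …, p-2}` and `c̃ i = c i · (1 + p + ⋯ + p^{m-1})`, one has
`u_{c̃}(X) = ∏_{j=0}^{m-1} u_c(X)^{p^j}` in `F_p[X]`. -/
theorem stmt8 (p : ℕ) [Fact p.Prime] (n m : ℕ) (hn : 1 ≤ n) (hm : 1 ≤ m)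
    (c : Fin n → ℕ) (hc : ∀ i, 1 ≤ c i ∧ c i ≤ p - 2) :
    uPoly p n (fun i => c i * ∑ j ∈ Finset.range m, p ^ j) =
      ∏ j ∈ Finset.range m, (uPoly p n c) ^ (p ^ j) :=
  stmt8_general p n m hn c hc
end

section
/- Let n, m ≥ 1, p a prime, and c_1, ..., c_n ∈ {1, ..., p-2}. For x ∈ F_{p^m}^× with x ≠ 1, set c̃_i = c_i(1 + p + ... + p^{m-1}) and S(x) = ∑ (1-x_1)^{c̃_1} ⋯ (1-x_n)^{c̃_n}, the sum over all (x_1, ..., x_n) ∈ (F_{p^m}^×)^n with x_1 ⋯ x_n = x. Then S(x) = (-1)^{n-1} · u_{c̃}(x), where u_{c̃}(X) = ∑_{r ≥ 0} (-1)^{nr} binom(c̃_1, r) ⋯ binom(c̃_n, r) X^r reduced mod p. -/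
/-!
Since `c̃ᵢ ≤ (p - 2)(1 + p + ⋯ + p^{m-1}) < (p - 1)(1 + p + ⋯ + p^{m-1}) = q - 1`, the binomial
expansion of each `(1 - xᵢ)^{c̃ᵢ}` only involves exponents `r < q - 1`. Solving
`x₀ = x · ∏_{i ≥ 1} xᵢ⁻¹`, the sum of a monomial `∏ xᵢ^{rᵢ}` over tuples with product `x` factors
into `x^{r₀}` times the sums `∑_{u ∈ K^×} u^{rᵢ} u^{-r₀}`, each of which is `-1` if `rᵢ = r₀` and
`0` otherwise. So only the diagonal monomials survive, each contributing
`(-1)^{n-1} x^r ∏ᵢ (-1)^r binom(c̃ᵢ, r)`.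
-/

open Finset

lemma Nat.mul_geomSum_lt_pow_sub_one {p c m : ℕ} (hp : 2 ≤ p) (hc : c ≤ p - 2) (hm : 1 ≤ m) :
    c * ∑ j ∈ range m, p ^ j < p ^ m - 1 := by
  have hs : 1 ≤ ∑ j ∈ range m, p ^ j :=
    single_le_sum (f := (p ^ ·)) (fun _ _ ↦ Nat.zero_le _) (mem_range.2 hm)
  have hgeom : (p - 1) * ∑ j ∈ range m, p ^ j = p ^ m - 1 := by
    have := Nat.one_le_pow m p (by omega)
    zify [show 1 ≤ p by omega, this]
    rw [mul_comm, geom_sum_mul]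
  rw [← hgeom]
  calc c * _ ≤ (p - 2) * _ := Nat.mul_le_mul_right _ hc
    _ < (p - 1) * _ := Nat.mul_lt_mul_of_pos_right (by omega) hs

lemma one_sub_pow_eq_sum_range {R : Type*} [CommRing R] (a : R) {N M : ℕ} (h : N < M) :
    (1 - a) ^ N = ∑ k ∈ range M, (-1) ^ k * N.choose k * a ^ k := by
  rw [sub_eq_neg_add, add_pow]
  refine sum_subset (range_subset_range.2 h) (fun k _ hk ↦ ?_) |>.trans (sum_congr rfl fun k _ ↦ ?_)
  · rw [mem_range, not_lt] at hk
    simp [Nat.choose_eq_zero_of_lt hk]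
  · rw [neg_pow]; ring

lemma Finset.sum_filter_prod_eq_eq_sum_cons {G M : Type*} [CommGroup G] [Fintype G] [DecidableEq G]
    [AddCommMonoid M] {n : ℕ} (x : G) (f : (Fin (n + 1) → G) → M) :
    ∑ t ∈ univ.filter (fun t : Fin (n + 1) → G ↦ ∏ i, t i = x), f t =
      ∑ s : Fin n → G, f (Fin.cons (x * (∏ i, s i)⁻¹) s) := by
  have hcons : ∀ t : Fin (n + 1) → G, ∏ i, t i = x →
      Fin.cons (x * (∏ i, Fin.tail t i)⁻¹) (Fin.tail t) = t := by
    rintro t rfl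
    simp [Fin.prod_univ_succ, Fin.tail]
  refine sum_nbij' Fin.tail (fun s ↦ Fin.cons (x * (∏ i, s i)⁻¹) s) (by simp)
    (by simp [Fin.prod_univ_succ]) (fun t ht ↦ hcons t (mem_filter.1 ht).2) (by simp)
    (fun t ht ↦ by rw [hcons t (mem_filter.1 ht).2])

lemma Finset.sum_ite_const_piFinset {α M : Type*} [DecidableEq α] [AddCommMonoid M] {n : ℕ}
    (s : Finset α) (F : (Fin (n + 1) → α) → M) :
    ∑ g ∈ Fintype.piFinset (fun _ ↦ s), (if ∀ i, g i = g 0 then F g else 0) =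
      ∑ a ∈ s, F (fun _ ↦ a) := by
  rw [← sum_filter]
  have hconst : ∀ g ∈ (Fintype.piFinset fun _ ↦ s).filter
      (fun g : Fin (n + 1) → α ↦ ∀ i, g i = g 0), (fun _ ↦ g 0) = g :=
    fun g hg ↦ funext fun i ↦ ((mem_filter.1 hg).2 i).symm
  refine sum_nbij' (· 0) (fun a _ ↦ a) (fun g hg ↦ ?_) (by simp +contextual) hconst (by simp)
    (fun g hg ↦ by rw [hconst g hg])
  exact Fintype.mem_piFinset.1 (mem_filter.1 hg).1 0

section FiniteField
variable {K : Type*} [Field K] [Fintype K] [DecidableEq K]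

lemma FiniteField.sum_units_pow_mul_inv_pow_s17 {a b : ℕ} (ha : a < Fintype.card K - 1)
    (hb : b < Fintype.card K - 1) :
    ∑ u : Kˣ, (u : K) ^ a * ((u⁻¹ : Kˣ) : K) ^ b = if a = b then -1 else 0 := by
  have hinv : ∀ u : Kˣ, ((u⁻¹ : Kˣ) : K) ^ b = (u : K) ^ (Fintype.card K - 1 - b) := by
    intro u
    rw [Units.val_inv_eq_inv_val, inv_pow, inv_eq_iff_eq_inv]
    refine eq_inv_of_mul_eq_one_left ?_
    rw [← pow_add, Nat.add_sub_cancel' hb.le, FiniteField.pow_card_sub_one_eq_one _ u.ne_zero]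
  simp_rw [hinv, ← pow_add, FiniteField.sum_pow_units]
  congr 1
  -- `0 < a + (q - 1 - b) < 2 (q - 1)`, so `q - 1` divides it only if it equals `q - 1`
  refine propext ⟨fun ⟨k, hk⟩ ↦ ?_, fun h ↦ ⟨1, by omega⟩⟩
  rcases k with _ | _ | k
  · omega
  · omega
  · have := Nat.mul_le_mul_left (Fintype.card K - 1) (show 2 ≤ k + 1 + 1 by omega)
    omega

theorem FiniteField.sum_prod_pow_of_prod_eq {n : ℕ} (x : Kˣ) (r : Fin (n + 1) → ℕ)
    (hr : ∀ i, r i < Fintype.card K - 1) :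
    ∑ t ∈ univ.filter (fun t : Fin (n + 1) → Kˣ ↦ ∏ i, t i = x), ∏ i, (t i : K) ^ r i =
      if ∀ i, r i = r 0 then (-1) ^ n * (x : K) ^ r 0 else 0 := by
  rw [sum_filter_prod_eq_eq_sum_cons]
  calc _ = ∑ s : Fin n → Kˣ, (x : K) ^ r 0 *
        ∏ i, ((s i : K) ^ r i.succ * ((s i)⁻¹ : Kˣ) ^ r 0) := by
        refine sum_congr rfl fun s _ ↦ ?_
        simp only [Fin.prod_univ_succ, Fin.cons_zero, Fin.cons_succ, Units.val_mul,
          Units.val_inv_eq_inv_val, Units.coe_prod, mul_pow, inv_pow, prod_mul_distrib, prod_pow,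
          prod_inv_distrib]
        ring
    _ = (x : K) ^ r 0 * ∏ i : Fin n, ∑ u : Kˣ, (u : K) ^ r i.succ * ((u⁻¹ : Kˣ) : K) ^ r 0 := by
        rw [← mul_sum, Fintype.prod_sum]
    _ = (x : K) ^ r 0 * ∏ i : Fin n, if r i.succ = r 0 then -1 else 0 := by
        simp_rw [sum_units_pow_mul_inv_pow_s17 (hr _) (hr 0)]
    _ = _ := by
        simp only [Fintype.prod_ite_zero, prod_const, card_univ, Fintype.card_fin,
          Fin.forall_fin_succ, true_and, mul_ite, mul_zero]
        rw [mul_comm]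

theorem FiniteField.sum_prod_sum_pow_of_prod_eq {n : ℕ} (x : Kˣ) (w : Fin (n + 1) → ℕ → K) :
    ∑ t ∈ univ.filter (fun t : Fin (n + 1) → Kˣ ↦ ∏ i, t i = x),
        ∏ i, ∑ r ∈ range (Fintype.card K - 1), w i r * (t i : K) ^ r =
      (-1) ^ n * ∑ r ∈ range (Fintype.card K - 1), (∏ i, w i r) * (x : K) ^ r := by
  set R := range (Fintype.card K - 1)
  calc _ = ∑ g ∈ Fintype.piFinset (fun _ ↦ R), (∏ i, w i (g i)) *
        ∑ t ∈ univ.filter (fun t : Fin (n + 1) → Kˣ ↦ ∏ i, t i = x), ∏ i, (t i : K) ^ g i := by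
        simp_rw [prod_univ_sum, prod_mul_distrib, mul_sum]
        exact sum_comm
    _ = ∑ g ∈ Fintype.piFinset (fun _ ↦ R),
        (if ∀ i, g i = g 0 then (∏ i, w i (g i)) * ((-1) ^ n * (x : K) ^ g 0) else 0) := by
        refine sum_congr rfl fun g hg ↦ ?_
        rw [sum_prod_pow_of_prod_eq x g fun i ↦ mem_range.1 (Fintype.mem_piFinset.1 hg i),
          mul_ite, mul_zero]
    _ = ∑ r ∈ R, (∏ i, w i r) * ((-1) ^ n * (x : K) ^ r) :=
        sum_ite_const_piFinset _ fun g ↦ (∏ i, w i (g i)) * ((-1) ^ n * (x : K) ^ g 0)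
    _ = _ := by
        rw [mul_sum]
        exact sum_congr rfl fun r _ ↦ by ring

end FiniteField

theorem stmt17_general (p n m : ℕ) (hp : p.Prime) (hn : 1 ≤ n) (hm : 1 ≤ m)
    (c : Fin n → ℕ) (hc : ∀ i, 1 ≤ c i ∧ c i ≤ p - 2)
    (K : Type*) [Field K] [Fintype K] [DecidableEq K] (hcard : Fintype.card K = p ^ m)
    (x : Kˣ) :
    (∑ t ∈ Finset.univ.filter (fun t : Fin n → Kˣ => ∏ i, t i = x),
        ∏ i, (1 - (t i : K)) ^ (c i * ∑ j ∈ Finset.range m, p ^ j)) =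
      (-1 : K) ^ (n - 1) *
        ∑ r ∈ Finset.range ((∑ i, c i * ∑ j ∈ Finset.range m, p ^ j) + 1),
          (-1 : K) ^ (n * r) *
            (∏ i, ((c i * ∑ j ∈ Finset.range m, p ^ j).choose r : K)) * (x : K) ^ r := by
  obtain ⟨n, rfl⟩ := Nat.exists_eq_add_of_le' hn
  set s := ∑ j ∈ range m, p ^ j
  have hN : ∀ i, c i * s < Fintype.card K - 1 := fun i ↦
    hcard ▸ Nat.mul_geomSum_lt_pow_sub_one hp.two_le (hc i).2 hm
  have hle : c 0 * s ≤ ∑ i, c i * s :=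
    single_le_sum (f := fun i ↦ c i * s) (fun _ _ ↦ Nat.zero_le _) (mem_univ 0)
  have hvanish : ∀ r ≥ c 0 * s + 1,
      (-1) ^ ((n + 1) * r) * (∏ i, ((c i * s).choose r : K)) * (x : K) ^ r = 0 := fun r hr ↦ by
    rw [prod_eq_zero (mem_univ 0) (by simp [Nat.choose_eq_zero_of_lt hr]), mul_zero, zero_mul]
  calc _ = ∑ t ∈ univ.filter (fun t : Fin (n + 1) → Kˣ ↦ ∏ i, t i = x), ∏ i,
        ∑ r ∈ range (Fintype.card K - 1), (-1) ^ r * ((c i * s).choose r : K) * (t i : K) ^ r := by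
        simp_rw [one_sub_pow_eq_sum_range _ (hN _)]
    _ = (-1) ^ n * ∑ r ∈ range (Fintype.card K - 1),
        (-1) ^ ((n + 1) * r) * (∏ i, ((c i * s).choose r : K)) * (x : K) ^ r := by
        rw [FiniteField.sum_prod_sum_pow_of_prod_eq]
        refine congrArg _ (sum_congr rfl fun r _ ↦ ?_)
        rw [prod_mul_distrib, prod_const, card_univ, Fintype.card_fin, ← pow_mul, mul_comm r]
    _ = _ := by
        rw [Nat.add_sub_cancel, eventually_constant_sum hvanish (hN 0),
          eventually_constant_sum hvanish (Nat.succ_le_succ hle)]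

/-- Let `K = F_{p^m}`, `c i ∈ {1, …, p-2}`, `c̃ i = c i (1 + p + ⋯ + p^{m-1})`, and
`x ∈ K^×` with `x ≠ 1`. Then the sum `S(x) = ∑ (1-x₁)^{c̃ 1} ⋯ (1-xₙ)^{c̃ n}` over all
tuples of units with product `x` equals `(-1)^{n-1} u_{c̃}(x)`, where
`u_{c̃}(X) = ∑_r (-1)^{nr} binom(c̃ 1, r) ⋯ binom(c̃ n, r) X^r` reduced mod `p`. -/
theorem stmt17 (p n m : ℕ) (hp : p.Prime) (hn : 1 ≤ n) (hm : 1 ≤ m)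
    (c : Fin n → ℕ) (hc : ∀ i, 1 ≤ c i ∧ c i ≤ p - 2)
    (K : Type*) [Field K] [Fintype K] [DecidableEq K] (hcard : Fintype.card K = p ^ m)
    (x : Kˣ) (hx : (x : K) ≠ 1) :
    (∑ t ∈ Finset.univ.filter (fun t : Fin n → Kˣ => ∏ i, t i = x),
        ∏ i, (1 - (t i : K)) ^ (c i * ∑ j ∈ Finset.range m, p ^ j)) =
      (-1 : K) ^ (n - 1) *
        ∑ r ∈ Finset.range ((∑ i, c i * ∑ j ∈ Finset.range m, p ^ j) + 1),
          (-1 : K) ^ (n * r) *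
            (∏ i, ((c i * ∑ j ∈ Finset.range m, p ^ j).choose r : K)) * (x : K) ^ r :=
  stmt17_general p n m hp hn hm c hc K hcard x
end
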